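/- Let n ≥ 1 be an integer, C₁, C₂ ∈ ℝ, and let π(θ) = ‖θ‖₂^{2−n}(C₁‖θ‖₂ + C₂‖θ‖₂^{−1})² for θ ∈ ℝⁿ, θ ≠ 0. Then for every θ ∈ ℝⁿ with θ ≠ 0 and C₁‖θ‖₂ + C₂‖θ‖₂^{−1} ≠ 0, one has ‖∇(log π)(θ)‖₂² + 2·Δ(log π)(θ) = (4n − n²)/‖θ‖₂². -/

import Mathlib

/-
With `u = ‖θ‖²`, `log π(θ) = F(u)` for `F(u) = -(n/2) log u + 2 log (C₁ u + C₂)`. For any radial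
function `g = F(‖·‖²)` one has `∇g(θ) = 2 F'(u) θ` and `Δg(θ) = 4 u F''(u) + 2 n F'(u)`, so
`‖∇g‖² + 2 Δg = 4 u F'(u)² + 8 u² F''(u) + 4 n F'(u)`. Here `F'(u) = -n/(2u) + 2w` and
`F''(u) = n/(2u²) - 2w²` with `w = C₁ / (C₁ u + C₂)`; all terms involving `w` cancel, leaving
`(4n - n²)/u`.
-/

/-- The Laplacian of `g : ℝⁿ → ℝ` at a point: trace of the Hessian, computed as
the sum of second partial derivatives along the standard basis. -/
noncomputable def lap {n : ℕ} (g : EuclideanSpace ℝ (Fin n) → ℝ)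
    (θ : EuclideanSpace ℝ (Fin n)) : ℝ :=
  ∑ i : Fin n, fderiv ℝ (fun x => fderiv ℝ g x (EuclideanSpace.single i 1)) θ
    (EuclideanSpace.single i 1)

/-- The weighting function π(θ) = ‖θ‖^(2−n) (C₁‖θ‖ + C₂‖θ‖⁻¹)². -/
noncomputable def piFun (n : ℕ) (C₁ C₂ : ℝ) (θ : EuclideanSpace ℝ (Fin n)) : ℝ :=
  ‖θ‖ ^ ((2 : ℝ) - n) * (C₁ * ‖θ‖ + C₂ * ‖θ‖⁻¹) ^ 2

open Real Filter Topology
open scoped RealInnerProductSpace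

section Radial

variable {E : Type*} [NormedAddCommGroup E] [InnerProductSpace ℝ E]
  {f f' : ℝ → ℝ} {d f'' : ℝ} {x : E}

theorem hasFDerivAt_comp_norm_sq (hf : HasDerivAt f d (‖x‖ ^ 2)) :
    HasFDerivAt (fun y => f (‖y‖ ^ 2)) ((2 * d) • innerSL ℝ x) x := by
  refine (hf.comp_hasFDerivAt x (hasStrictFDerivAt_norm_sq x).hasFDerivAt).congr_fderiv ?_
  ext v
  simp only [smul_apply, coe_innerSL_apply, nsmul_eq_mul, Nat.cast_ofNat, smul_eq_mul]
  ring

theorem hasGradientAt_comp_norm_sq [CompleteSpace E] (hf : HasDerivAt f d (‖x‖ ^ 2)) :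
    HasGradientAt (fun y => f (‖y‖ ^ 2)) ((2 * d) • x) x := by
  rw [hasGradientAt_iff_hasFDerivAt, map_smul]
  exact hasFDerivAt_comp_norm_sq hf

theorem fderiv_fderiv_comp_norm_sq_apply (hf : ∀ᶠ u in 𝓝 (‖x‖ ^ 2), HasDerivAt f (f' u) u)
    (hf' : HasDerivAt f' f'' (‖x‖ ^ 2)) (v : E) :
    fderiv ℝ (fun y => fderiv ℝ (fun z => f (‖z‖ ^ 2)) y v) x v
      = 4 * f'' * ⟪x, v⟫ ^ 2 + 2 * f' (‖x‖ ^ 2) * ‖v‖ ^ 2 := by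
  have hfirst : (fun y => fderiv ℝ (fun z => f (‖z‖ ^ 2)) y v)
      =ᶠ[𝓝 x] fun y => 2 * f' (‖y‖ ^ 2) * ⟪v, y⟫ := by
    filter_upwards [((continuous_norm.pow 2).tendsto x).eventually hf] with y hy
    rw [(hasFDerivAt_comp_norm_sq hy).fderiv]
    simp [real_inner_comm, mul_assoc]
  have hsecond : HasFDerivAt (fun y => 2 * f' (‖y‖ ^ 2) * ⟪v, y⟫) _ x :=
    ((hasFDerivAt_comp_norm_sq hf').const_mul 2).mul (innerSL ℝ v).hasFDerivAt
  rw [hfirst.fderiv_eq, hsecond.fderiv]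
  simp only [real_inner_comm, add_apply, smul_apply, coe_innerSL_apply, inner_self_eq_norm_sq_to_K,
    ringHom_apply, smul_eq_mul]
  ring

end Radial

theorem Filter.EventuallyEq.lap_eq {n : ℕ} {g h : EuclideanSpace ℝ (Fin n) → ℝ}
    {θ : EuclideanSpace ℝ (Fin n)} (hgh : g =ᶠ[𝓝 θ] h) : lap g θ = lap h θ := by
  refine Finset.sum_congr rfl fun i _ => ?_
  rw [Filter.EventuallyEq.fderiv_eq]
  filter_upwards [hgh.fderiv (𝕜 := ℝ)] with y hy
  rw [hy]

theorem lap_comp_norm_sq {n : ℕ} {f f' : ℝ → ℝ} {f'' : ℝ} {θ : EuclideanSpace ℝ (Fin n)}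
    (hf : ∀ᶠ u in 𝓝 (‖θ‖ ^ 2), HasDerivAt f (f' u) u) (hf' : HasDerivAt f' f'' (‖θ‖ ^ 2)) :
    lap (fun y => f (‖y‖ ^ 2)) θ = 4 * f'' * ‖θ‖ ^ 2 + 2 * n * f' (‖θ‖ ^ 2) := by
  simp only [lap, fderiv_fderiv_comp_norm_sq_apply hf hf']
  simp only [EuclideanSpace.inner_single_right, ringHom_apply, one_mul, PiLp.norm_single, norm_one,
    one_pow, mul_one, Finset.sum_add_distrib, ← Finset.mul_sum, ← EuclideanSpace.real_norm_sq_eq,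
    Finset.sum_const, Finset.card_univ, Fintype.card_fin, nsmul_eq_mul]
  ring

/-- `log π` as a function of `u = ‖θ‖²`, using `π(θ) = ‖θ‖ ^ (-n) * (C₁ ‖θ‖² + C₂)²`. -/
noncomputable def logPiProfile (n : ℕ) (C₁ C₂ u : ℝ) : ℝ :=
  -(n / 2) * log u + 2 * log (C₁ * u + C₂)

noncomputable def logPiProfileDeriv (n : ℕ) (C₁ C₂ u : ℝ) : ℝ :=
  -(n / 2) * u⁻¹ + 2 * C₁ * (C₁ * u + C₂)⁻¹

section Profile

variable {n : ℕ} {C₁ C₂ u : ℝ}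

theorem log_piFun_eq {x : EuclideanSpace ℝ (Fin n)} (hx : x ≠ 0) (hC : C₁ * ‖x‖ ^ 2 + C₂ ≠ 0) :
    log (piFun n C₁ C₂ x) = logPiProfile n C₁ C₂ (‖x‖ ^ 2) := by
  have hr : 0 < ‖x‖ := norm_pos_iff.mpr hx
  have hfactor : C₁ * ‖x‖ + C₂ * ‖x‖⁻¹ = (C₁ * ‖x‖ ^ 2 + C₂) / ‖x‖ := by
    field_simp
  rw [piFun, hfactor, log_mul (by positivity) (by positivity), log_rpow hr, log_pow,
    log_div hC hr.ne', logPiProfile, log_pow]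
  push_cast
  ring

theorem hasDerivAt_logPiProfile (hu : u ≠ 0) (hC : C₁ * u + C₂ ≠ 0) :
    HasDerivAt (logPiProfile n C₁ C₂) (logPiProfileDeriv n C₁ C₂ u) u := by
  have hlin : HasDerivAt (fun u => C₁ * u + C₂) C₁ u :=
    ((hasDerivAt_id' u).const_mul C₁).add_const C₂ |>.congr_deriv (mul_one _)
  refine (((hasDerivAt_log hu).const_mul _).add ((hlin.log hC).const_mul 2)).congr_deriv ?_
  simp only [logPiProfileDeriv, div_eq_mul_inv]
  ring

theorem hasDerivAt_logPiProfileDeriv (hu : u ≠ 0) (hC : C₁ * u + C₂ ≠ 0) :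
    HasDerivAt (logPiProfileDeriv n C₁ C₂)
      (n / 2 * (u⁻¹) ^ 2 - 2 * C₁ ^ 2 * ((C₁ * u + C₂)⁻¹) ^ 2) u := by
  have hlin : HasDerivAt (fun u => C₁ * u + C₂) C₁ u :=
    ((hasDerivAt_id' u).const_mul C₁).add_const C₂ |>.congr_deriv (mul_one _)
  refine (((hasDerivAt_inv hu).const_mul _).add ((hlin.inv hC).const_mul _)).congr_deriv ?_
  field_simp
  ring

end Profile

theorem stmt1_general (n : ℕ) (C₁ C₂ : ℝ)
    (θ : EuclideanSpace ℝ (Fin n)) (hθ : θ ≠ 0)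
    (hC : C₁ * ‖θ‖ + C₂ * ‖θ‖⁻¹ ≠ 0) :
    ‖gradient (fun x => Real.log (piFun n C₁ C₂ x)) θ‖ ^ 2
      + 2 * lap (fun x => Real.log (piFun n C₁ C₂ x)) θ
      = (4 * n - n ^ 2) / ‖θ‖ ^ 2 := by
  have hr : ‖θ‖ ≠ 0 := norm_ne_zero_iff.mpr hθ
  have hv : C₁ * ‖θ‖ ^ 2 + C₂ ≠ 0 := by
    contrapose! hC
    field_simp
    linear_combination hC
  have hgood : ∀ᶠ u in 𝓝 (‖θ‖ ^ 2), u ≠ 0 ∧ C₁ * u + C₂ ≠ 0 :=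
    (eventually_ne_nhds (pow_ne_zero 2 hr)).and
      ((show Continuous fun u : ℝ => C₁ * u + C₂ by fun_prop).continuousAt.eventually_ne hv)
  have hg : (fun x => log (piFun n C₁ C₂ x)) =ᶠ[𝓝 θ] fun x => logPiProfile n C₁ C₂ (‖x‖ ^ 2) := by
    filter_upwards [((continuous_norm.pow 2).tendsto θ).eventually hgood] with x ⟨hx, hxC⟩
    exact log_piFun_eq (by simpa using hx) hxC
  have hgrad := (hasGradientAt_comp_norm_sq
    (hasDerivAt_logPiProfile (n := n) (pow_ne_zero 2 hr) hv)).congr_of_eventuallyEq hg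
  rw [hgrad.gradient, hg.lap_eq,
    lap_comp_norm_sq (hgood.mono fun u hu => hasDerivAt_logPiProfile hu.1 hu.2)
      (hasDerivAt_logPiProfileDeriv (pow_ne_zero 2 hr) hv), norm_smul]
  simp only [logPiProfileDeriv, Real.norm_eq_abs, mul_pow, sq_abs]
  generalize (C₁ * ‖θ‖ ^ 2 + C₂)⁻¹ = w
  field_simp
  ring

theorem stmt1 (n : ℕ) (hn : 1 ≤ n) (C₁ C₂ : ℝ)
    (θ : EuclideanSpace ℝ (Fin n)) (hθ : θ ≠ 0)
    (hC : C₁ * ‖θ‖ + C₂ * ‖θ‖⁻¹ ≠ 0) :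
    ‖gradient (fun x => Real.log (piFun n C₁ C₂ x)) θ‖ ^ 2
      + 2 * lap (fun x => Real.log (piFun n C₁ C₂ x)) θ
      = (4 * n - n ^ 2) / ‖θ‖ ^ 2 :=
  stmt1_general n C₁ C₂ θ hθ hC
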